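/- Let k be a field, B a k-bialgebra with multiplication m, unit η, comultiplication Δ and counit ε, and let S : B → B be a k-linear map that is both an algebra anti-homomorphism (S(xy) = S(y)S(x), S(1) = 1) and a coalgebra anti-homomorphism (Δ(S(b)) = S(b₍₂₎) ⊗ S(b₍₁₎), ε ∘ S = ε). Let H be the sum of all subcoalgebras C of B such that S(c₍₁₎)c₍₂₎ = c₍₁₎S(c₍₂₎) = ε(c)1 for all c ∈ C. Then H is a subbialgebra of B, S(H) ⊆ H, and H together with the restriction of S is a Hopf algebra over k. -/

import Mathlib

/-!
The elements `c` with `S(c₁)c₂ = c₁S(c₂) = ε(c)1` form a submodule `antipodeLocus S`. Because `S`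
is an anti-homomorphism of algebras and of coalgebras, this submodule contains `1` and is closed
under products and under `S`, with no coalgebra condition needed. Subcoalgebras are closed under
sums, under products (in a bialgebra) and under images by coalgebra anti-homomorphisms, so `H` is
the largest subcoalgebra inside `antipodeLocus S`, and therefore contains `1`, `H * H` and `S(H)`.
Over a field `H ⊗ H → B ⊗ B` is injective, so the comultiplication of `B` restricts to `H`; the
antipode axioms for the restriction of `S` are then the defining property of `antipodeLocus S`.
-/

universe u v

def IsSubcoalgebra {k : Type u} [CommRing k] {C : Type v} [AddCommGroup C] [Module k C]
    [Coalgebra k C] (V : Submodule k C) : Prop :=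
  ∀ v ∈ V, Coalgebra.comul (R := k) v ∈
    LinearMap.range (TensorProduct.map V.subtype V.subtype)

open TensorProduct Coalgebra

section Subcoalgebra

variable {k : Type*} [CommRing k]

lemma isSubcoalgebra_sSup {C : Type*} [AddCommGroup C] [Module k C] [Coalgebra k C]
    {s : Set (Submodule k C)} (hs : ∀ V ∈ s, IsSubcoalgebra V) : IsSubcoalgebra (sSup s) :=
  show sSup s ≤ (LinearMap.range (mapIncl (sSup s) (sSup s))).comap (comul (R := k)) from
    sSup_le fun V hV _ hv => range_mapIncl_mono (le_sSup hV) (le_sSup hV) (hs V hV _ hv)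

lemma isGreatest_sSup_isSubcoalgebra_le {C : Type*} [AddCommGroup C] [Module k C]
    [Coalgebra k C] (K : Submodule k C) :
    IsGreatest {V | IsSubcoalgebra V ∧ V ≤ K} (sSup {V | IsSubcoalgebra V ∧ V ≤ K}) :=
  ⟨⟨isSubcoalgebra_sSup fun _ hV => hV.1, sSup_le fun _ hV => hV.2⟩, fun _ hV => le_sSup hV⟩

lemma IsSubcoalgebra.map_of_comul_comp {C : Type*} [AddCommGroup C] [Module k C] [Coalgebra k C]
    {S : C →ₗ[k] C}
    (hS : comul ∘ₗ S = map S S ∘ₗ (TensorProduct.comm k C C).toLinearMap ∘ₗ comul)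
    {V : Submodule k C} (hV : IsSubcoalgebra V) : IsSubcoalgebra (V.map S) := by
  rintro _ ⟨v, hv, rfl⟩
  obtain ⟨t, ht⟩ := hV v hv
  rw [← LinearMap.comp_apply, hS, LinearMap.comp_apply, LinearMap.comp_apply, ← ht]
  clear ht
  induction t using TensorProduct.induction_on with
  | zero => simp
  | tmul a b =>
    exact ⟨⟨S b, Submodule.mem_map_of_mem b.2⟩ ⊗ₜ ⟨S a, Submodule.mem_map_of_mem a.2⟩, rfl⟩
  | add x y hx hy => simpa only [map_add] using add_mem hx hy

variable {P Q : Type*} [Ring P] [Algebra k P] [Ring Q] [Algebra k Q]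

lemma range_mapIncl_mul_le (V W : Submodule k P) (V' W' : Submodule k Q) :
    LinearMap.range (mapIncl V V') * LinearMap.range (mapIncl W W') ≤
      LinearMap.range (mapIncl (V * W) (V' * W')) := by
  simp only [range_map_eq_span_tmul, Submodule.span_mul_span, Submodule.span_le]
  rintro _ ⟨_, ⟨a, b, rfl⟩, _, ⟨c, d, rfl⟩, rfl⟩
  exact Submodule.subset_span
    ⟨⟨a * c, Submodule.mul_mem_mul a.2 c.2⟩, ⟨b * d, Submodule.mul_mem_mul b.2 d.2⟩,
      (Algebra.TensorProduct.tmul_mul_tmul _ _ _ _).symm⟩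

variable {B : Type*} [Ring B] [Bialgebra k B]

lemma isSubcoalgebra_one : IsSubcoalgebra (1 : Submodule k B) := by
  intro x hx
  obtain ⟨a, rfl⟩ := Submodule.mem_one.1 hx
  have h1 : (1 : B) ∈ (1 : Submodule k B) := Submodule.one_le.1 le_rfl
  rw [Bialgebra.comul_algebraMap, Algebra.algebraMap_eq_smul_one, Algebra.TensorProduct.one_def]
  exact Submodule.smul_mem _ a ⟨⟨1, h1⟩ ⊗ₜ ⟨1, h1⟩, rfl⟩

lemma IsSubcoalgebra.mul {V W : Submodule k B} (hV : IsSubcoalgebra V) (hW : IsSubcoalgebra W) :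
    IsSubcoalgebra (V * W) :=
  show V * W ≤ (LinearMap.range (mapIncl (V * W) (V * W))).comap (comul (R := k)) from
    Submodule.mul_le.2 fun v hv w hw => by
      rw [Submodule.mem_comap, Bialgebra.comul_mul]
      exact range_mapIncl_mul_le V W V W (Submodule.mul_mem_mul (hV v hv) (hW w hw))

end Subcoalgebra

section AntiMultiplicative

variable {k : Type*} [CommRing k] {B : Type*} [Ring B] [Algebra k B] {S : B →ₗ[k] B}

lemma mul'_rTensor_mul_tmul (hS : ∀ x y : B, S (x * y) = S y * S x) (t : B ⊗[k] B) (c d : B) :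
    LinearMap.mul' k B (S.rTensor B (t * c ⊗ₜ d)) =
      S c * LinearMap.mul' k B (S.rTensor B t) * d := by
  induction t using TensorProduct.induction_on with
  | zero => simp
  | tmul a b => simp [hS, mul_assoc]
  | add t t' ht ht' => simp only [add_mul, map_add, ht, ht', mul_add]

lemma mul'_lTensor_tmul_mul (hS : ∀ x y : B, S (x * y) = S y * S x) (c d : B) (t : B ⊗[k] B) :
    LinearMap.mul' k B (S.lTensor B (c ⊗ₜ d * t)) =
      c * LinearMap.mul' k B (S.lTensor B t) * S d := by
  induction t using TensorProduct.induction_on with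
  | zero => simp
  | tmul a b => simp [hS, mul_assoc]
  | add t t' ht ht' => simp only [mul_add, map_add, ht, ht', add_mul]

lemma mul'_rTensor_mul_of_eq_algebraMap (hS : ∀ x y : B, S (x * y) = S y * S x)
    {t : B ⊗[k] B} {a : k} (ht : LinearMap.mul' k B (S.rTensor B t) = algebraMap k B a)
    (t' : B ⊗[k] B) :
    LinearMap.mul' k B (S.rTensor B (t * t')) = a • LinearMap.mul' k B (S.rTensor B t') := by
  induction t' using TensorProduct.induction_on with
  | zero => simp
  | tmul c d => simp [mul'_rTensor_mul_tmul hS, ht, Algebra.commutes, mul_assoc, Algebra.smul_def]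
  | add t₁ t₂ h₁ h₂ => simp only [mul_add, map_add, h₁, h₂, smul_add]

lemma mul'_lTensor_mul_of_eq_algebraMap (hS : ∀ x y : B, S (x * y) = S y * S x)
    {t' : B ⊗[k] B} {a : k} (ht' : LinearMap.mul' k B (S.lTensor B t') = algebraMap k B a)
    (t : B ⊗[k] B) :
    LinearMap.mul' k B (S.lTensor B (t * t')) = a • LinearMap.mul' k B (S.lTensor B t) := by
  induction t using TensorProduct.induction_on with
  | zero => simp
  | tmul c d => simp [mul'_lTensor_tmul_mul hS, ht', Algebra.commutes, mul_assoc, Algebra.smul_def]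
  | add t₁ t₂ h₁ h₂ => simp only [add_mul, map_add, h₁, h₂, smul_add]

lemma mul'_rTensor_map_comm (hS : ∀ x y : B, S (x * y) = S y * S x) (t : B ⊗[k] B) :
    LinearMap.mul' k B (S.rTensor B (map S S (TensorProduct.comm k B B t))) =
      S (LinearMap.mul' k B (S.lTensor B t)) := by
  induction t using TensorProduct.induction_on with
  | zero => simp
  | tmul a b => simp [hS]
  | add t t' ht ht' => simp only [map_add, ht, ht']

lemma mul'_lTensor_map_comm (hS : ∀ x y : B, S (x * y) = S y * S x) (t : B ⊗[k] B) :
    LinearMap.mul' k B (S.lTensor B (map S S (TensorProduct.comm k B B t))) =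
      S (LinearMap.mul' k B (S.rTensor B t)) := by
  induction t using TensorProduct.induction_on with
  | zero => simp
  | tmul a b => simp [hS]
  | add t t' ht ht' => simp only [map_add, ht, ht']

end AntiMultiplicative

section AntipodeLocus

variable {k : Type*} [CommRing k] {B : Type*} [Ring B] [Bialgebra k B] {S : B →ₗ[k] B}

variable (S) in
def antipodeLocus : Submodule k B :=
  LinearMap.eqLocus (LinearMap.mul' k B ∘ₗ S.rTensor B ∘ₗ comul) (Algebra.linearMap k B ∘ₗ counit) ⊓
  LinearMap.eqLocus (LinearMap.mul' k B ∘ₗ S.lTensor B ∘ₗ comul) (Algebra.linearMap k B ∘ₗ counit)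

lemma mem_antipodeLocus {c : B} :
    c ∈ antipodeLocus S ↔
      LinearMap.mul' k B (S.rTensor B (comul c)) = algebraMap k B (counit c) ∧
      LinearMap.mul' k B (S.lTensor B (comul c)) = algebraMap k B (counit c) :=
  Iff.rfl

lemma one_mem_antipodeLocus (hS : S 1 = 1) : (1 : B) ∈ antipodeLocus S := by
  simp [mem_antipodeLocus, Algebra.TensorProduct.one_def, hS]

lemma mul_mem_antipodeLocus (hS : ∀ x y : B, S (x * y) = S y * S x) {x y : B}
    (hx : x ∈ antipodeLocus S) (hy : y ∈ antipodeLocus S) : x * y ∈ antipodeLocus S := by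
  obtain ⟨hx₁, hx₂⟩ := mem_antipodeLocus.1 hx
  obtain ⟨hy₁, hy₂⟩ := mem_antipodeLocus.1 hy
  rw [mem_antipodeLocus, Bialgebra.comul_mul, Bialgebra.counit_mul, map_mul (algebraMap k B)]
  constructor
  · rw [mul'_rTensor_mul_of_eq_algebraMap hS hx₁, hy₁, Algebra.smul_def]
  · rw [mul'_lTensor_mul_of_eq_algebraMap hS hy₂, hx₂, Algebra.smul_def, Algebra.commutes]

lemma map_mem_antipodeLocus (hSmul : ∀ x y : B, S (x * y) = S y * S x) (hSone : S 1 = 1)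
    (hScomul : comul ∘ₗ S = map S S ∘ₗ (TensorProduct.comm k B B).toLinearMap ∘ₗ comul)
    (hScounit : counit ∘ₗ S = counit) {x : B} (hx : x ∈ antipodeLocus S) :
    S x ∈ antipodeLocus S := by
  have hSalg (a : k) : S (algebraMap k B a) = algebraMap k B a := by
    rw [Algebra.algebraMap_eq_smul_one, map_smul, hSone]
  have hcomul : comul (S x) = map S S (TensorProduct.comm k B B (comul x)) :=
    LinearMap.congr_fun hScomul x
  have hcounit : counit (S x) = counit (R := k) x := LinearMap.congr_fun hScounit x
  rw [mem_antipodeLocus, hcomul, hcounit, mul'_rTensor_map_comm hSmul, mul'_lTensor_map_comm hSmul,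
    (mem_antipodeLocus.1 hx).1, (mem_antipodeLocus.1 hx).2, hSalg]
  exact ⟨rfl, rfl⟩

end AntipodeLocus

namespace Coalgebra

variable {R : Type*} [CommRing R] {M : Type*} [AddCommGroup M] [Module R M] [Module.Flat R M]
  {C : Type*} [AddCommGroup C] [Module R C] [Coalgebra R C] [Module.Flat R C]
  {ι : M →ₗ[R] C} (hι : Function.Injective ι)
  (hcomul : ∀ x, comul (ι x) ∈ LinearMap.range (map ι ι))

noncomputable def inducedComul : M →ₗ[R] M ⊗[R] M :=
  (LinearEquiv.ofInjective _ (map_injective_of_flat_flat ι ι hι hι)).symm.toLinearMap ∘ₗ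
    (comul ∘ₗ ι).codRestrict _ hcomul

lemma map_comp_inducedComul : map ι ι ∘ₗ inducedComul hι hcomul = comul ∘ₗ ι :=
  LinearMap.ext fun x => LinearEquiv.ofInjective_symm_apply (map ι ι)
    (h := map_injective_of_flat_flat ι ι hι hι) ((comul ∘ₗ ι).codRestrict _ hcomul x)

lemma map_inducedComul (x : M) : map ι ι (inducedComul hι hcomul x) = comul (ι x) :=
  LinearMap.congr_fun (map_comp_inducedComul hι hcomul) x

noncomputable abbrev induced : Coalgebra R M where
  comul := inducedComul hι hcomul
  counit := counit ∘ₗ ι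
  coassoc := LinearMap.ext fun x => by
    apply map_injective_of_flat_flat ι (map ι ι) hι (map_injective_of_flat_flat ι ι hι hι)
    simp only [LinearMap.comp_apply, LinearEquiv.coe_coe, map_map_assoc, LinearMap.map_rTensor,
      LinearMap.map_lTensor, map_comp_inducedComul]
    rw [← LinearMap.rTensor_map, ← LinearMap.lTensor_map, map_inducedComul, coassoc_apply]
  rTensor_counit_comp_comul := LinearMap.ext fun x => by
    apply Module.Flat.lTensor_preserves_injective_linearMap ι hι
    rw [LinearMap.comp_apply, ← LinearMap.comp_apply (LinearMap.lTensor R ι),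
      LinearMap.lTensor_comp_rTensor, ← LinearMap.rTensor_map, map_inducedComul,
      rTensor_counit_comul]
    rfl
  lTensor_counit_comp_comul := LinearMap.ext fun x => by
    apply Module.Flat.rTensor_preserves_injective_linearMap ι hι
    rw [LinearMap.comp_apply, ← LinearMap.comp_apply (LinearMap.rTensor R ι),
      LinearMap.rTensor_comp_lTensor, ← LinearMap.lTensor_map, map_inducedComul,
      lTensor_counit_comul]
    rfl

lemma map_comul_induced (x : M) :
    letI := induced hι hcomul
    map ι ι (comul x) = comul (ι x) :=
  map_inducedComul hι hcomul x

lemma counit_induced (x : M) :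
    letI := induced hι hcomul
    counit (R := R) x = counit (ι x) :=
  rfl

end Coalgebra

lemma AlgHom.apply_mul' {R M A : Type*} [CommRing R] [Ring M] [Algebra R M] [Ring A] [Algebra R A]
    (f : M →ₐ[R] A) (t : M ⊗[R] M) :
    f (LinearMap.mul' R M t) = LinearMap.mul' R A (map f.toLinearMap f.toLinearMap t) := by
  induction t using TensorProduct.induction_on with
  | zero => simp
  | tmul a b => simp
  | add t t' ht ht' => simp only [map_add, ht, ht']

section InducedBialgebra

variable {R : Type*} [CommRing R] {M : Type*} [Ring M] [Algebra R M] [Module.Flat R M]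
  {B : Type*} [Ring B] [Bialgebra R B] [Module.Flat R B] {ι : M →ₐ[R] B}
  (hι : Function.Injective ι.toLinearMap)
  (hcomul : ∀ x, comul (ι.toLinearMap x) ∈ LinearMap.range (map ι.toLinearMap ι.toLinearMap))

namespace Bialgebra

noncomputable abbrev induced : Bialgebra R M :=
  have hmap : ∀ t, map ι.toLinearMap ι.toLinearMap t = Algebra.TensorProduct.map ι ι t :=
    fun _ => rfl
  have hinj := map_injective_of_flat_flat _ _ hι hι
  @Bialgebra.mk' R M _ _ _ (Coalgebra.induced hι hcomul)
    (by rw [Coalgebra.counit_induced, AlgHom.toLinearMap_apply, map_one, Bialgebra.counit_one])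
    (by
      intro a b
      simp only [Coalgebra.counit_induced, AlgHom.toLinearMap_apply, map_mul, Bialgebra.counit_mul])
    (hinj <| by
      rw [Coalgebra.map_comul_induced, AlgHom.toLinearMap_apply, map_one, Bialgebra.comul_one,
        hmap, map_one])
    (fun {a b} => hinj <| by
      rw [Coalgebra.map_comul_induced, AlgHom.toLinearMap_apply, map_mul, Bialgebra.comul_mul, hmap,
        map_mul, ← hmap, ← hmap, Coalgebra.map_comul_induced, Coalgebra.map_comul_induced]
      rfl)

noncomputable def inducedHom :
    letI := induced hι hcomul
    M →ₐc[R] B :=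
  letI := induced hι hcomul
  { ι with
    map_smul' := map_smul ι
    counit_comp := rfl
    map_comp_comul := Coalgebra.map_comp_inducedComul hι hcomul }

end Bialgebra

namespace HopfAlgebra

noncomputable abbrev induced {S : B →ₗ[R] B} {T : M →ₗ[R] M}
    (hT : ι.toLinearMap ∘ₗ T = S ∘ₗ ι.toLinearMap) (hS : ∀ x, ι x ∈ antipodeLocus S) :
    HopfAlgebra R M :=
  { Bialgebra.induced hι hcomul with
    antipode := T
    mul_antipode_rTensor_comul := LinearMap.ext fun x => hι <| by
      rw [LinearMap.comp_apply, LinearMap.comp_apply, AlgHom.toLinearMap_apply, AlgHom.apply_mul',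
        LinearMap.map_rTensor, hT, ← LinearMap.rTensor_map, Coalgebra.map_comul_induced,
        AlgHom.toLinearMap_apply, (mem_antipodeLocus.1 (hS x)).1]
      exact (ι.commutes _).symm
    mul_antipode_lTensor_comul := LinearMap.ext fun x => hι <| by
      rw [LinearMap.comp_apply, LinearMap.comp_apply, AlgHom.toLinearMap_apply, AlgHom.apply_mul',
        LinearMap.map_lTensor, hT, ← LinearMap.lTensor_map, Coalgebra.map_comul_induced,
        AlgHom.toLinearMap_apply, (mem_antipodeLocus.1 (hS x)).2]
      exact (ι.commutes _).symm }

end HopfAlgebra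

end InducedBialgebra

/-- Let `B` be a bialgebra and `S : B → B` a `k`-linear map which is both an algebra
anti-homomorphism and a coalgebra anti-homomorphism.  Let `H` be the sum of all
subcoalgebras `C` of `B` such that `S(c₍₁₎)c₍₂₎ = c₍₁₎S(c₍₂₎) = ε(c)1` for all `c ∈ C`.
Then `H` is a subbialgebra of `B` (a subcoalgebra containing `1` and closed under
multiplication), `S(H) ⊆ H`, and `H` together with the restriction of `S` is a Hopf
algebra: there is a Hopf algebra `H'` and an injective bialgebra map `i : H' → B` with
image exactly `H` which intertwines the antipode of `H'` with `S`. -/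
theorem sum_of_antipode_subcoalgebras_is_hopf {k : Type u} [Field k] {B : Type v}
    [Ring B] [Bialgebra k B] (S : B →ₗ[k] B)
    (hSmul : ∀ x y : B, S (x * y) = S y * S x) (hSone : S 1 = 1)
    (hScomul : Coalgebra.comul (R := k) (A := B) ∘ₗ S =
      TensorProduct.map S S ∘ₗ (TensorProduct.comm k B B).toLinearMap ∘ₗ
        Coalgebra.comul (R := k) (A := B))
    (hScounit : Coalgebra.counit (R := k) (A := B) ∘ₗ S = Coalgebra.counit)
    (H : Submodule k B)
    (hH : H = sSup {V : Submodule k B | IsSubcoalgebra V ∧ ∀ c ∈ V,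
      LinearMap.mul' k B (LinearMap.rTensor B S (Coalgebra.comul (R := k) c)) =
        algebraMap k B (Coalgebra.counit (R := k) c) ∧
      LinearMap.mul' k B (LinearMap.lTensor B S (Coalgebra.comul (R := k) c)) =
        algebraMap k B (Coalgebra.counit (R := k) c)}) :
    IsSubcoalgebra H ∧ (1 : B) ∈ H ∧ (∀ x ∈ H, ∀ y ∈ H, x * y ∈ H) ∧
      (∀ x ∈ H, S x ∈ H) ∧
      ∃ (H' : Type v) (_ring : Ring H') (_hopf : HopfAlgebra k H') (i : H' →ₐc[k] B),
        Function.Injective ⇑i ∧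
        Set.range ⇑i = (H : Set B) ∧
        ∀ x : H', i (HopfAlgebra.antipode (R := k) x) = S (i x) := by
  obtain ⟨⟨hHcoalg, hHlocus⟩, hHmax⟩ : IsGreatest {V | IsSubcoalgebra V ∧ V ≤ antipodeLocus S} H :=
    hH ▸ isGreatest_sSup_isSubcoalgebra_le (antipodeLocus S)
  have h1 : (1 : B) ∈ H :=
    hHmax ⟨isSubcoalgebra_one, Submodule.one_le.2 (one_mem_antipodeLocus hSone)⟩
      (Submodule.one_le.1 le_rfl)
  have hmul : ∀ x ∈ H, ∀ y ∈ H, x * y ∈ H := fun x hx y hy =>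
    hHmax ⟨hHcoalg.mul hHcoalg, Submodule.mul_le.2 fun _ ha _ hb =>
      mul_mem_antipodeLocus hSmul (hHlocus ha) (hHlocus hb)⟩ (Submodule.mul_mem_mul hx hy)
  have hSH : ∀ x ∈ H, S x ∈ H := fun x hx =>
    hHmax ⟨hHcoalg.map_of_comul_comp hScomul, Submodule.map_le_iff_le_comap.2 fun _ ha =>
      map_mem_antipodeLocus hSmul hSone hScomul hScounit (hHlocus ha)⟩ (Submodule.mem_map_of_mem hx)
  refine ⟨hHcoalg, h1, hmul, hSH, ?_⟩
  let A := H.toSubalgebra h1 fun x y hx hy => hmul x hx y hy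
  have hι : Function.Injective A.val.toLinearMap := Subtype.val_injective
  have hcomul (x : A) : comul (A.val.toLinearMap x) ∈
      LinearMap.range (map A.val.toLinearMap A.val.toLinearMap) :=
    hHcoalg x x.2
  let T : A →ₗ[k] A := (S ∘ₗ A.val.toLinearMap).codRestrict H fun x => hSH x x.2
  exact ⟨A, inferInstance, HopfAlgebra.induced (T := T) hι hcomul rfl fun x => hHlocus x.2,
    Bialgebra.inducedHom hι hcomul, hι, Subtype.range_coe, fun _ => rfl⟩
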